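/- arXiv:1710.04146 — 3 statements merged into one kernel-verified Lean document; each statement's English description precedes it below -/
import Mathlib

section
/- Let a, b ∈ ℤ with a ≤ −1 and b ≥ 1, and let Box = [a,b] ⊆ ℝ. Let f be an integral concave piecewise-affine function on Box which is at height one, satisfies f(0) > 0, and is not of the form x ↦ u·x + c with u, c ∈ ℤ. If f(1) > −1, then f(−1) ≤ 1; similarly, if f(−1) > −1, then f(1) ≤ 1. -/
/-! If `f(σ) > -1` and `f(-σ) > 1` for some `σ = ±1`, then every point `x` in the interior of
`[a,b]` carries a height-one supporting functional `y ↦ u y + m f(y)` with `m > 0` and value `1`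
(if `m ≤ 0` the functional is convex with an interior maximum, hence constant, and its negative
works). Evaluating at `±σ` squeezes the integer `σ u` strictly between `m - 1` and `m + 1`, so
`u = σ m` and `f(y) + σ y ≤ f(x) + σ x` for all `y`. Thus `f(y) + σ y` is maximal at every interior
point, hence equal to `f(0)` on the interior, and by upper semicontinuity on all of `[a,b]`.
Since `f(b)` is an integer and `0 < f(0) = 1/m ≤ 1`, we get `f(0) = 1` and `f(y) = 1 - σ y`,
contradicting that `f` is not integral affine. -/

open scoped BigOperators

noncomputable section

/-- Embedding of a lattice point of `ℤ^d × ℤ` into `ℝ^d × ℝ`. -/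
def latticeEmbed (d : ℕ) (p : (Fin d → ℤ) × ℤ) : (Fin d → ℝ) × ℝ :=
  (fun i => (p.1 i : ℝ), (p.2 : ℝ))

/-- `Box ⊆ ℝ^d` is a lattice polytope: the convex hull of a finite set of lattice points. -/
def IsLatticePolytope (d : ℕ) (Box : Set (Fin d → ℝ)) : Prop :=
  ∃ S : Finset (Fin d → ℤ),
    Box = convexHull ℝ ((fun v : Fin d → ℤ => fun i => (v i : ℝ)) '' (S : Set (Fin d → ℤ)))

/-- The pairing of `x ∈ ℝ^d` with an integral vector `u ∈ ℤ^d`. -/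
def dotZ (d : ℕ) (x : Fin d → ℝ) (u : Fin d → ℤ) : ℝ := ∑ i, x i * (u i : ℝ)

/-- `f` is an integral concave piecewise-affine function on `Box`: there is a finite set
`S ⊆ ℤ^d × ℤ` such that `Box` is the projection of `conv S` and `f x` is the largest `t`
with `(x, t) ∈ conv S`. -/
def IsICPA (d : ℕ) (Box : Set (Fin d → ℝ)) (f : (Fin d → ℝ) → ℝ) : Prop :=
  ∃ S : Finset ((Fin d → ℤ) × ℤ),
    Prod.fst '' (convexHull ℝ (latticeEmbed d '' (S : Set ((Fin d → ℤ) × ℤ)))) = Box ∧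
    ∀ x ∈ Box,
      IsGreatest {t : ℝ | (x, t) ∈ convexHull ℝ (latticeEmbed d '' (S : Set ((Fin d → ℤ) × ℤ)))}
        (f x)

/-- Every facet of the graph of `f` lies at height one. -/
def AtHeightOne (d : ℕ) (Box : Set (Fin d → ℝ)) (f : (Fin d → ℝ) → ℝ) : Prop :=
  ∀ x ∈ Box, ∃ (u : Fin d → ℤ) (m : ℤ),
    |dotZ d x u + (m : ℝ) * f x| = 1 ∧
    ∀ y ∈ Box, dotZ d y u + (m : ℝ) * f y ≤ dotZ d x u + (m : ℝ) * f x

/-- A combinatorial divisorial polytope (CDP) with base in `ℝ^d`. -/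
structure CDP (d : ℕ) where
  box : Set (Fin d → ℝ)
  funcs : List ((Fin d → ℝ) → ℝ)
  lattice : IsLatticePolytope d box
  fullDim : (interior box).Nonempty
  icpa : ∀ f ∈ funcs, IsICPA d box f
  posSum : ∀ x ∈ interior box, 0 < (funcs.map (fun f => f x)).sum

/-- Two functions agree on a set. -/
def EqOnBox (d : ℕ) (B : Set (Fin d → ℝ)) (f g : (Fin d → ℝ) → ℝ) : Prop :=
  ∀ x ∈ B, f x = g x

/-- Move (i): addition of the zero function. -/
def MoveZero (d : ℕ) (P Q : CDP d) : Prop :=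
  Q.box = P.box ∧
    List.Forall₂ (EqOnBox d P.box) Q.funcs (P.funcs ++ [fun _ => (0 : ℝ)])

/-- Move (ii): permutation of the functions. -/
def MovePerm (d : ℕ) (P Q : CDP d) : Prop :=
  Q.box = P.box ∧ ∃ L, List.Perm L P.funcs ∧ List.Forall₂ (EqOnBox d P.box) Q.funcs L

/-- Move (iii): integral affine transformation of the base. -/
def MoveAffine (d : ℕ) (P Q : CDP d) : Prop :=
  ∃ (A B : Matrix (Fin d) (Fin d) ℤ) (t : Fin d → ℤ),
    A * B = 1 ∧ B * A = 1 ∧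
    Q.box = (fun x : Fin d → ℝ => fun i => (∑ j, (A i j : ℝ) * x j) + (t i : ℝ)) '' P.box ∧
    List.Forall₂ (EqOnBox d Q.box) Q.funcs
      (P.funcs.map (fun f => f ∘ fun x : Fin d → ℝ => fun i => ∑ j, (B i j : ℝ) * (x j - (t j : ℝ))))

/-- Move (iv): translation by integers summing to zero. -/
def MoveTranslate (d : ℕ) (P Q : CDP d) : Prop :=
  Q.box = P.box ∧ ∃ α : List ℤ, α.length = P.funcs.length ∧ α.sum = 0 ∧
    List.Forall₂ (EqOnBox d P.box) Q.funcs
      (List.zipWith (fun f (a : ℤ) => fun x => f x + (a : ℝ)) P.funcs α)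

/-- Move (v): shearing by a covector with integral coefficients summing to zero. -/
def MoveShear (d : ℕ) (P Q : CDP d) : Prop :=
  Q.box = P.box ∧ ∃ (v : Fin d → ℤ) (β : List ℤ), β.length = P.funcs.length ∧ β.sum = 0 ∧
    List.Forall₂ (EqOnBox d P.box) Q.funcs
      (List.zipWith (fun f (b : ℤ) => fun x => f x + (b : ℝ) * dotZ d x v) P.funcs β)

/-- One elementary move between CDPs. -/
def CDPMove (d : ℕ) (P Q : CDP d) : Prop :=
  MoveZero d P Q ∨ MovePerm d P Q ∨ MoveAffine d P Q ∨ MoveTranslate d P Q ∨ MoveShear d P Q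

/-- Equivalence of CDPs: the smallest equivalence relation generated by the moves. -/
def CDPEquiv (d : ℕ) : CDP d → CDP d → Prop := Relation.EqvGen (CDPMove d)

/-- The on-the-nose Fano conditions for a CDP. -/
def IsFanoWitness (d : ℕ) (P : CDP d) : Prop :=
  ∃ a : List ℤ, a.sum = -2 ∧
    (0 : Fin d → ℝ) ∈ interior P.box ∧
    List.Forall₂ (fun f (ai : ℤ) =>
      AtHeightOne d P.box (fun x => f x + (ai : ℝ) + 1) ∧ 0 < f 0 + (ai : ℝ) + 1)
      P.funcs a ∧
    ∀ x ∈ frontier P.box,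
      (P.funcs.map (fun f => f x)).sum = 0 ∨
      ∃ u : Fin d → ℤ, dotZ d x u = 1 ∧ ∀ y ∈ P.box, dotZ d y u ≤ 1

/-- A CDP is Fano if it is equivalent to one satisfying the Fano conditions. -/
def IsFano (d : ℕ) (P : CDP d) : Prop := ∃ Q : CDP d, CDPEquiv d P Q ∧ IsFanoWitness d Q

/-- A CDP is toric if it is equivalent to one with at most two functions. -/
def IsToric (d : ℕ) (P : CDP d) : Prop := ∃ Q : CDP d, CDPEquiv d P Q ∧ Q.funcs.length ≤ 2

/-- `f` agrees on `Box` with an affine function with integral slope and constant. -/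
def IsIntegralAffineOn (d : ℕ) (Box : Set (Fin d → ℝ)) (f : (Fin d → ℝ) → ℝ) : Prop :=
  ∃ (u : Fin d → ℤ) (c : ℤ), ∀ x ∈ Box, f x = dotZ d x u + (c : ℝ)

/-- Normalized Fano data on `Box`: the translated functions `Ψᵢ' = Ψᵢ + aᵢ + 1` of a
normalized Fano CDP. -/
def NormalizedFanoData (d n : ℕ) (Box : Set (Fin d → ℝ))
    (f : Fin n → (Fin d → ℝ) → ℝ) : Prop :=
  (∀ i, IsICPA d Box (f i)) ∧
  (∀ i, AtHeightOne d Box (f i)) ∧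
  (∀ i, 0 < f i 0) ∧
  (∀ i, ¬ IsIntegralAffineOn d Box (f i)) ∧
  (∀ x ∈ Box, (n : ℝ) - 2 ≤ ∑ i, f i x) ∧
  (∀ x ∈ interior Box, (n : ℝ) - 2 < ∑ i, f i x) ∧
  (∀ x ∈ frontier Box,
    (∑ i, f i x) = (n : ℝ) - 2 ∨
    ∃ u : Fin d → ℤ, dotZ d x u = 1 ∧ ∀ y ∈ Box, dotZ d y u ≤ 1)

/-- `α_v = min{1, max{α ≥ 0 : ±αv ∈ Box}}`. -/
def alphaV (d : ℕ) (Box : Set (Fin d → ℝ)) (v : Fin d → ℤ) : ℝ :=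
  min 1 (sSup {α : ℝ | 0 ≤ α ∧ (fun i => α * (v i : ℝ)) ∈ Box ∧
    (fun i => -(α * (v i : ℝ))) ∈ Box})

/-- A primitive integral vector: the gcd of its coordinates is 1. -/
def IsPrimitive (d : ℕ) (v : Fin d → ℤ) : Prop := Finset.univ.gcd v = 1

/-- `f` restricted to `Box ∩ ℝ·v` is affine. -/
def AffineOnLine (d : ℕ) (Box : Set (Fin d → ℝ)) (v : Fin d → ℤ)
    (f : (Fin d → ℝ) → ℝ) : Prop :=
  ∃ s c : ℝ, ∀ t : ℝ, (fun i => t * (v i : ℝ)) ∈ Box →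
    f (fun i => t * (v i : ℝ)) = s * t + c

/-- The interval `[a,b]` as a subset of `ℝ¹ = (Fin 1 → ℝ)`. -/
def intervalBox (a b : ℤ) : Set (Fin 1 → ℝ) := {p : Fin 1 → ℝ | (a : ℝ) ≤ p 0 ∧ p 0 ≤ (b : ℝ)}

/-- The `d`-dimensional cross polytope `conv{±e₁, …, ±e_d}`. -/
def crossPolytope (d : ℕ) : Set (Fin d → ℝ) :=
  convexHull ℝ {x : Fin d → ℝ | ∃ j : Fin d, x = Pi.single j 1 ∨ x = -Pi.single j 1}

open Set Filter Topology

theorem UpperSemicontinuousWithinAt.le_of_forall_le_of_mem_closure {α : Type*}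
    [TopologicalSpace α] {f g : α → ℝ} {s t : Set α} {x : α}
    (hf : UpperSemicontinuousWithinAt f s x) (hg : ContinuousWithinAt g s x) (hts : t ⊆ s)
    (hx : x ∈ closure t) (hle : ∀ y ∈ t, g y ≤ f y) : g x ≤ f x := by
  by_contra! hlt
  have hf' : ∀ᶠ y in 𝓝[s] x, f y < (f x + g x) / 2 := hf _ (by linarith)
  have hg' : ∀ᶠ y in 𝓝[s] x, (f x + g x) / 2 < g y := hg.eventually_const_lt (by linarith)
  have := mem_closure_iff_nhdsWithin_neBot.1 hx
  obtain ⟨y, ⟨hfy, hgy⟩, hyt⟩ :=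
    (((hf'.and hg').filter_mono (nhdsWithin_mono x hts)).and self_mem_nhdsWithin).exists
  linarith [hle y hyt]

theorem ConvexOn.eq_of_isMaxOn_Icc {a b x : ℝ} {φ : ℝ → ℝ} (hφ : ConvexOn ℝ (Icc a b) φ)
    (hx : x ∈ Ioo a b) (hmax : IsMaxOn φ (Icc a b) x) : ∀ y ∈ Icc a b, φ y = φ x := by
  have hab : a ≤ b := hx.1.le.trans hx.2.le
  have ha : a ∈ Icc a b := left_mem_Icc.2 hab
  have hb : b ∈ Icc a b := right_mem_Icc.2 hab
  intro y hy
  refine le_antisymm (hmax hy) ?_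
  rcases le_total y x with hyx | hxy
  · exact hφ.le_left_of_right_le'' hy hb hyx hx.2 (hmax hb)
  · exact hφ.le_right_of_left_le'' ha hy hx.1 hxy (hmax ha)

theorem Int.eq_of_add_mul_le_one {u m : ℤ} {p q : ℝ} (hm : 0 < m) (hp : -1 < p) (hq : 1 < q)
    (hup : u + m * p ≤ 1) (huq : -u + m * q ≤ 1) : u = m := by
  have hm' : (0 : ℝ) < m := by exact_mod_cast hm
  have hlt : (u : ℝ) < m + 1 := by nlinarith
  have hgt : (m : ℝ) - 1 < u := by nlinarith
  have : u < m + 1 := by exact_mod_cast hlt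
  have : m - 1 < u := by exact_mod_cast hgt
  omega

namespace IsICPA

variable {d : ℕ} {Box : Set (Fin d → ℝ)} {f : (Fin d → ℝ) → ℝ}

theorem concaveOn (hf : IsICPA d Box f) : ConcaveOn ℝ Box f := by
  obtain ⟨S, hproj, hmax⟩ := hf
  have hconv : Convex ℝ Box :=
    hproj ▸ (convex_convexHull ℝ _).linear_image (LinearMap.fst ℝ _ _)
  refine ⟨hconv, fun x hx y hy α β hα hβ hαβ => (hmax _ (hconv hx hy hα hβ hαβ)).2 ?_⟩
  have hmem := convex_convexHull ℝ _ (hmax x hx).1 (hmax y hy).1 hα hβ hαβ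
  simpa only [Prod.smul_mk, Prod.mk_add_mk, Set.mem_ofPred_eq] using hmem

/-- If `f x < c`, the part of the compact set `conv S` where `t ≥ c` projects to a closed set
avoiding `x`. -/
theorem upperSemicontinuousOn (hf : IsICPA d Box f) : UpperSemicontinuousOn f Box := by
  obtain ⟨S, -, hmax⟩ := hf
  set K := convexHull ℝ (latticeEmbed d '' (S : Set ((Fin d → ℤ) × ℤ)))
  intro x hx c hc
  have hclosed : IsClosed (Prod.fst '' (K ∩ {p | c ≤ p.2})) :=
    (((S.finite_toSet.image _).isCompact_convexHull ℝ).inter_right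
      (isClosed_le continuous_const continuous_snd)).image continuous_fst |>.isClosed
  have hxC : x ∉ Prod.fst '' (K ∩ {p | c ≤ p.2}) := by
    rintro ⟨⟨y, t⟩, ⟨hK, hct⟩, rfl⟩
    exact (hc.trans_le hct).not_ge ((hmax y hx).2 hK)
  filter_upwards [nhdsWithin_le_nhds (hclosed.isOpen_compl.mem_nhds hxC), self_mem_nhdsWithin]
    with y hyC hy
  exact lt_of_not_ge fun hcy => hyC ⟨(y, f y), ⟨(hmax y hy).1, hcy⟩, rfl⟩

/-- Above an extreme point of `Box` the top of `conv S` is an extreme point of `conv S`,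
hence a lattice point. -/
theorem exists_int_eq_of_mem_extremePoints (hf : IsICPA d Box f) {x : Fin d → ℝ}
    (hx : x ∈ Box.extremePoints ℝ) : ∃ z : ℤ, f x = z := by
  obtain ⟨S, hproj, hmax⟩ := hf
  set K := convexHull ℝ (latticeEmbed d '' (S : Set ((Fin d → ℤ) × ℤ)))
  have hfst : ∀ p ∈ K, p.1 ∈ Box := fun p hp => by rw [← hproj]; exact ⟨p, hp, rfl⟩
  have hext : (x, f x) ∈ K.extremePoints ℝ := by
    refine ⟨(hmax x hx.1).1, fun p hp q hq hseg => ?_⟩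
    obtain ⟨α, β, hα, hβ, hαβ, hpq⟩ := hseg
    have hp1 : p.1 = x := hx.2 (hfst p hp) (hfst q hq) ⟨α, β, hα, hβ, hαβ, congrArg Prod.fst hpq⟩
    have hq1 : q.1 = x := hx.2 (hfst q hq) (hfst p hp)
      ⟨β, α, hβ, hα, by linarith, by rw [add_comm]; exact congrArg Prod.fst hpq⟩
    have hp2 : p.2 ≤ f x := (hmax x hx.1).2 (by rw [← hp1]; exact hp)
    have hq2 : q.2 ≤ f x := (hmax x hx.1).2 (by rw [← hq1]; exact hq)
    have hsum : α * p.2 + β * q.2 = f x := congrArg Prod.snd hpq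
    have hαp : α * (f x - p.2) ≤ 0 := by
      linear_combination congrArg (· * f x) hαβ - hsum + β * hq2
    exact Prod.ext hp1 (le_antisymm hp2 (by nlinarith) : p.2 = f x)
  obtain ⟨s, -, hs⟩ := extremePoints_convexHull_subset hext
  exact ⟨s.2, (congrArg Prod.snd hs).symm⟩

end IsICPA

/-- `AtHeightOne 1` in the coordinate of `ℝ ≃ (Fin 1 → ℝ)`. -/
def AtHeightOneOn (s : Set ℝ) (F : ℝ → ℝ) : Prop :=
  ∀ x ∈ s, ∃ u m : ℤ, |x * u + m * F x| = 1 ∧ ∀ y ∈ s, y * u + m * F y ≤ x * u + m * F x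

section Interval

variable {a b : ℤ} {F : ℝ → ℝ}

theorem AtHeightOneOn.exists_pos_support (hF : AtHeightOneOn (Icc (a : ℝ) b) F)
    (hconc : ConcaveOn ℝ (Icc (a : ℝ) b) F) (h0 : (0 : ℝ) ∈ Icc (a : ℝ) b) (hF0 : 0 < F 0)
    {x : ℝ} (hx : x ∈ Ioo (a : ℝ) b) :
    ∃ u m : ℤ, 0 < m ∧ x * u + m * F x = 1 ∧ ∀ y ∈ Icc (a : ℝ) b, y * u + m * F y ≤ 1 := by
  obtain ⟨u, m, habs, hmax⟩ := hF x (Ioo_subset_Icc_self hx)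
  rcases le_or_gt m 0 with hm | hm
  · have hφ : ConvexOn ℝ (Icc (a : ℝ) b) fun y => y * u + m * F y := by
      have hmr : (0 : ℝ) ≤ -m := neg_nonneg.2 (by exact_mod_cast hm)
      refine (((LinearMap.mulRight ℝ (u : ℝ)).convexOn (convex_Icc _ _)).add
        (hconc.smul hmr).neg).congr fun y _ => ?_
      simp only [LinearMap.mulRight_apply, Pi.add_apply, Pi.neg_apply, smul_eq_mul]
      ring
    have hconst := hφ.eq_of_isMaxOn_Icc hx hmax
    have hval : (m : ℝ) * F 0 = x * u + m * F x := by simpa using hconst 0 h0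
    have hneg : (m : ℝ) * F 0 = -1 := by
      have : (m : ℝ) * F 0 ≤ 0 := mul_nonpos_of_nonpos_of_nonneg (by exact_mod_cast hm) hF0.le
      rw [← hval] at habs
      rcases abs_eq zero_le_one |>.1 habs with h | h
      · linarith
      · exact h
    have hm0 : m ≠ 0 := by rintro rfl; simp at hneg
    refine ⟨-u, -m, by omega, by push_cast; linarith, fun y hy => ?_⟩
    push_cast
    linarith [hconst y hy]
  · have hpos : 0 < x * u + m * F x :=
      (mul_pos (Int.cast_pos.2 hm) hF0).trans_le (by simpa using hmax 0 h0)
    rw [abs_of_pos hpos] at habs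
    exact ⟨u, m, hm, habs, fun y hy => habs ▸ hmax y hy⟩

variable {σ : ℤ}

theorem AtHeightOneOn.isMaxOn_add_mul (hF : AtHeightOneOn (Icc (a : ℝ) b) F)
    (hconc : ConcaveOn ℝ (Icc (a : ℝ) b) F) (ha : a ≤ -1) (hb : 1 ≤ b) (hF0 : 0 < F 0)
    (hσ : σ = 1 ∨ σ = -1) (h₁ : -1 < F σ) (h₂ : 1 < F (-σ)) {x : ℝ} (hx : x ∈ Ioo (a : ℝ) b) :
    IsMaxOn (fun y => F y + σ * y) (Icc (a : ℝ) b) x := by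
  have hmem : ∀ y : ℝ, -1 ≤ y → y ≤ 1 → y ∈ Icc (a : ℝ) b := fun y h₁ h₂ =>
    ⟨(by exact_mod_cast ha : (a : ℝ) ≤ -1).trans h₁, h₂.trans (by exact_mod_cast hb)⟩
  have hσσ : (σ : ℝ) * σ = 1 := by rcases hσ with rfl | rfl <;> norm_num
  have hσ₁ : -1 ≤ (σ : ℝ) ∧ (σ : ℝ) ≤ 1 := by rcases hσ with rfl | rfl <;> norm_num
  obtain ⟨u, m, hm, hval, hle⟩ :=
    hF.exists_pos_support hconc (hmem 0 (by norm_num) (by norm_num)) hF0 hx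
  have hσu : σ * u = m := Int.eq_of_add_mul_le_one hm h₁ h₂
    (by push_cast; linarith [hle σ (hmem σ hσ₁.1 hσ₁.2)])
    (by push_cast; linarith [hle (-σ) (hmem (-σ) (by linarith) (by linarith))])
  have hu : (u : ℝ) = σ * m := by
    have := congrArg (Int.cast (R := ℝ)) hσu
    push_cast at this
    linear_combination (-(u : ℝ)) * hσσ + (σ : ℝ) * this
  intro y hy
  have hy' := hle y hy
  rw [hu] at hy' hval
  have hm' : (0 : ℝ) < m := by exact_mod_cast hm
  refine le_of_mul_le_mul_left ?_ hm'
  linear_combination hy' - hval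

theorem eq_one_sub_mul_of_neg_one_lt (hF : AtHeightOneOn (Icc (a : ℝ) b) F)
    (hconc : ConcaveOn ℝ (Icc (a : ℝ) b) F) (husc : UpperSemicontinuousOn F (Icc (a : ℝ) b))
    (hFb : ∃ z : ℤ, F b = z) (ha : a ≤ -1) (hb : 1 ≤ b) (hF0 : 0 < F 0)
    (hσ : σ = 1 ∨ σ = -1) (h₁ : -1 < F σ) (h₂ : 1 < F (-σ)) :
    ∀ y ∈ Icc (a : ℝ) b, F y = 1 - σ * y := by
  have ha' : (a : ℝ) ≤ -1 := by exact_mod_cast ha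
  have hb' : (1 : ℝ) ≤ b := by exact_mod_cast hb
  have h0 : (0 : ℝ) ∈ Ioo (a : ℝ) b := ⟨by linarith, by linarith⟩
  have hmax := fun x (hx : x ∈ Ioo (a : ℝ) b) => hF.isMaxOn_add_mul hconc ha hb hF0 hσ h₁ h₂ hx
  have hlin : ∀ y ∈ Icc (a : ℝ) b, F y = F 0 - σ * y := by
    have hcont : Continuous fun y : ℝ => F 0 - σ * y := by fun_prop
    have hge : ∀ y ∈ Icc (a : ℝ) b, F 0 - σ * y ≤ F y := fun y hy =>
      UpperSemicontinuousWithinAt.le_of_forall_le_of_mem_closure (husc y hy)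
        hcont.continuousWithinAt Ioo_subset_Icc_self (by rwa [closure_Ioo (by linarith)])
        fun z hz => by
          linarith [show F 0 + σ * 0 ≤ F z + σ * z from hmax z hz (Ioo_subset_Icc_self h0)]
    intro y hy
    linarith [hge y hy, show F y + σ * y ≤ F 0 + σ * 0 from hmax 0 h0 hy]
  have hF01 : F 0 = 1 := by
    obtain ⟨u, m, hm, hval, -⟩ := hF.exists_pos_support hconc (Ioo_subset_Icc_self h0) hF0 h0
    have hm' : (1 : ℝ) ≤ m := by exact_mod_cast hm
    have hF0le : F 0 ≤ 1 := by nlinarith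
    obtain ⟨z, hz⟩ := hFb
    have hint : F 0 = ((z + σ * b : ℤ) : ℝ) := by
      push_cast
      linarith [hlin b ⟨by linarith, le_rfl⟩]
    have hpos : 0 < z + σ * b := by exact_mod_cast hint ▸ hF0
    have hle : z + σ * b ≤ 1 := by exact_mod_cast hint ▸ hF0le
    rw [hint, show z + σ * b = 1 by omega, Int.cast_one]
  intro y hy
  rw [hlin y hy, hF01]

end Interval

theorem const_mem_extremePoints_intervalBox {a b : ℤ} (hab : a ≤ b) :
    (fun _ => (b : ℝ)) ∈ (intervalBox a b).extremePoints ℝ := by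
  refine ⟨⟨Int.cast_le.2 hab, le_rfl⟩,
    fun p hp q hq ⟨α, β, hα, hβ, hαβ, hpq⟩ => funext fun i => ?_⟩
  have h : α * p 0 + β * q 0 = b := by simpa using congrFun hpq 0
  rw [Subsingleton.elim i 0]
  have hβq : β * q 0 ≤ β * b := mul_le_mul_of_nonneg_left hq.2 hβ.le
  have hαp : α * b ≤ α * p 0 := by linear_combination congrArg (· * (b : ℝ)) hαβ - h + hβq
  exact le_antisymm hp.2 (le_of_mul_le_mul_left hαp hα)

theorem AtHeightOne.atHeightOneOn_Icc {a b : ℤ} {f : (Fin 1 → ℝ) → ℝ}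
    (hf : AtHeightOne 1 (intervalBox a b) f) :
    AtHeightOneOn (Icc (a : ℝ) b) fun s => f fun _ => s := by
  intro x hx
  obtain ⟨u, m, habs, hmax⟩ := hf (fun _ => x) hx
  exact ⟨u 0, m, by simpa [dotZ] using habs, fun y hy => by simpa [dotZ] using hmax (fun _ => y) hy⟩

theorem isIntegralAffineOn_intervalBox {a b : ℤ} {f : (Fin 1 → ℝ) → ℝ} (u c : ℤ)
    (hf : ∀ y ∈ Icc (a : ℝ) b, f (fun _ => y) = u * y + c) :
    IsIntegralAffineOn 1 (intervalBox a b) f := by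
  refine ⟨fun _ => u, c, fun x hx => ?_⟩
  have hx' : x = fun _ => x 0 := funext fun i => congrArg x (Subsingleton.elim i 0)
  rw [show f x = f (fun _ => x 0) from congrArg f hx', hf (x 0) hx]
  simp [dotZ, mul_comm]

/-- For a translated function of a normalized two-dimensional Fano CDP on `[a,b]`:
if `f(1) > -1` then `f(-1) ≤ 1`, and if `f(-1) > -1` then `f(1) ≤ 1`. -/
theorem value_le_one_of_other_gt_neg_one
    (a b : ℤ) (ha : a ≤ -1) (hb : 1 ≤ b)
    (f : (Fin 1 → ℝ) → ℝ)
    (hicpa : IsICPA 1 (intervalBox a b) f)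
    (hht : AtHeightOne 1 (intervalBox a b) f)
    (hf0 : 0 < f 0)
    (hnl : ¬ IsIntegralAffineOn 1 (intervalBox a b) f) :
    ((-1 : ℝ) < f (fun _ => 1) → f (fun _ => -1) ≤ 1) ∧
    ((-1 : ℝ) < f (fun _ => -1) → f (fun _ => 1) ≤ 1) := by
  have hconc : ConcaveOn ℝ (Icc (a : ℝ) b) fun s => f fun _ => s :=
    hicpa.concaveOn.comp_linearMap (LinearMap.pi fun _ => LinearMap.id)
  have husc : UpperSemicontinuousOn (fun s => f fun _ => s) (Icc (a : ℝ) b) :=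
    hicpa.upperSemicontinuousOn.comp (continuous_pi fun _ => continuous_id).continuousOn
      fun _ hy => hy
  have hfb : ∃ z : ℤ, f (fun _ => (b : ℝ)) = z :=
    hicpa.exists_int_eq_of_mem_extremePoints (const_mem_extremePoints_intervalBox (by omega))
  have key : ∀ σ : ℤ, (σ = 1 ∨ σ = -1) →
      -1 < f (fun _ => (σ : ℝ)) → f (fun _ => -(σ : ℝ)) ≤ 1 := fun σ hσ h₁ => by
    by_contra! h₂
    refine hnl (isIntegralAffineOn_intervalBox (-σ) 1 fun y hy => ?_)
    rw [eq_one_sub_mul_of_neg_one_lt hht.atHeightOneOn_Icc hconc husc hfb ha hb hf0 hσ h₁ h₂ y hy]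
    push_cast
    ring
  exact ⟨fun h => by simpa using key 1 (.inl rfl) (by simpa using h),
    fun h => by simpa using key (-1) (.inr rfl) (by simpa using h)⟩

end
end

section
/- Let a, b ∈ ℤ with a < 0 < b and b − a > 2, and let Box = [a,b] ⊆ ℝ. Let f be an integral concave piecewise-affine function on Box which is at height one and satisfies f(0) = 1. Then f is affine on [a,0] and affine on [0,b]; in particular, the graph of f has at most one interior vertex, which can only lie above 0. -/
open scoped BigOperators

noncomputable section

/-! At an interior point `x` the height-one condition gives an integral functional `(u, m)`
maximised over the graph of `f` at `(x, f x)`, with value `±1`. If `m ≤ 0` the functional is convex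
along the graph with an interior maximum, hence constant, so `f` is affine and `m = -1`; if `m > 0`,
comparing with its value at `(0, 1)` forces `m = 1` and value `1`. Either way a line `y ↦ 1 - k y`
through `(0, 1)` supports `f` at `x`. Two such lines touching `f` on the same side of `0` coincide,
so `f` is affine on each side of `0` inside the open interval, and closedness of the convex hull
defining `f` extends this to the endpoints. -/

open Set Filter Topology

namespace IsICPA

variable {d : ℕ} {Box : Set (Fin d → ℝ)} {f : (Fin d → ℝ) → ℝ}

theorem convex (hf : IsICPA d Box f) : Convex ℝ Box := by
  obtain ⟨S, hproj, -⟩ := hf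
  exact hproj ▸ (convex_convexHull ℝ _).linear_image (LinearMap.fst ℝ _ ℝ)

theorem le_of_tendsto (hf : IsICPA d Box f) {ι : Type*} {l : Filter ι} [l.NeBot]
    {φ : ι → Fin d → ℝ} {x : Fin d → ℝ} {t : ℝ} (hx : x ∈ Box) (hφBox : ∀ᶠ i in l, φ i ∈ Box)
    (hφ : Tendsto φ l (𝓝 x)) (hfφ : Tendsto (f ∘ φ) l (𝓝 t)) : t ≤ f x := by
  obtain ⟨S, -, hmax⟩ := hf
  have hK : IsClosed (convexHull ℝ (latticeEmbed d '' (S : Set ((Fin d → ℤ) × ℤ)))) :=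
    (S.finite_toSet.image _).isCompact_convexHull (𝕜 := ℝ) |>.isClosed
  exact (hmax x hx).2 <|
    hK.mem_of_tendsto (hφ.prodMk_nhds hfφ) (hφBox.mono fun i hi => (hmax _ hi).1)

end IsICPA

theorem ConcaveOn.eq_of_isMinOn_of_mem_Ioo {φ : ℝ → ℝ} {a b x y : ℝ}
    (hφ : ConcaveOn ℝ (Icc a b) φ) (hx : x ∈ Ioo a b) (hmin : IsMinOn φ (Icc a b) x)
    (hy : y ∈ Icc a b) : φ y = φ x := by
  have ha : a ∈ Icc a b := left_mem_Icc.2 (hx.1.trans hx.2).le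
  have hb : b ∈ Icc a b := right_mem_Icc.2 (hx.1.trans hx.2).le
  refine le_antisymm ?_ (hmin hy)
  rcases le_or_gt y x with hyx | hxy
  · exact hφ.left_le_of_le_right'' hy hb hyx hx.2 (hmin hb)
  · exact hφ.right_le_of_le_left'' ha hy hx.1 hxy.le (hmin ha)

def IsSupportingSlope (s : Set ℝ) (g : ℝ → ℝ) (x k : ℝ) : Prop :=
  (∀ y ∈ s, g y ≤ 1 - k * y) ∧ g x = 1 - k * x

theorem IsSupportingSlope.slope_eq {s : Set ℝ} {g : ℝ → ℝ} {x y k k' : ℝ}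
    (hk : IsSupportingSlope s g x k) (hk' : IsSupportingSlope s g y k') (hx : x ∈ s) (hy : y ∈ s)
    (hxy : 0 < x * y) : k = k' := by
  have h₁ := hk.1 y hy
  have h₂ := hk'.1 x hx
  rw [hk'.2] at h₁
  rw [hk.2] at h₂
  have h := mul_nonneg (sub_nonneg.2 h₁) (sub_nonneg.2 h₂)
  have hsq : (k - k') ^ 2 ≤ 0 := nonpos_of_mul_nonpos_left (by nlinarith) hxy
  nlinarith [sq_nonneg (k - k')]

theorem ConcaveOn.exists_isSupportingSlope {g : ℝ → ℝ} {a b x : ℝ}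
    (hg : ConcaveOn ℝ (Icc a b) g) (h0 : (0 : ℝ) ∈ Icc a b) (hg0 : g 0 = 1) (hx : x ∈ Ioo a b)
    (u m : ℤ) (habs : |x * u + m * g x| = 1)
    (hmax : ∀ y ∈ Icc a b, y * u + m * g y ≤ x * u + m * g x) :
    ∃ k : ℝ, IsSupportingSlope (Icc a b) g x k := by
  rcases le_or_gt m 0 with hm | hm
  · have hconc : ConcaveOn ℝ (Icc a b) fun y => (-m : ℝ) * g y - y * u :=
      (hg.smul (by simpa using hm)).sub
        (((LinearMap.mul ℝ ℝ).flip (u : ℝ)).convexOn (convex_Icc a b))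
    have hconst : ∀ y ∈ Icc a b, (-m : ℝ) * g y - y * u = -m * g x - x * u := fun y hy =>
      hconc.eq_of_isMinOn_of_mem_Ioo hx
        (fun z hz => show (-m : ℝ) * g x - x * u ≤ -m * g z - z * u by linarith [hmax z hz]) hy
    have hval : x * u + m * g x = m := by
      have h := hconst 0 h0
      rw [hg0] at h
      linarith
    have hm1 : (m : ℝ) = -1 := by
      rw [hval, abs_of_nonpos (by exact_mod_cast hm)] at habs
      linarith
    simp only [hm1, neg_neg, one_mul] at hconst hval
    refine ⟨-u, fun y hy => ?_, ?_⟩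
    · linarith [hconst y hy]
    · linarith
  · -- `m` is an integer, so `1 ≤ m ≤ x * u + m * g x ≤ 1`
    have hm1 : (m : ℝ) = 1 := by
      have h₀ := hmax 0 h0
      have : (1 : ℝ) ≤ m := by exact_mod_cast hm
      rw [hg0] at h₀
      rcases abs_eq (zero_le_one' ℝ) |>.1 habs with h | h <;> linarith
    rw [hm1, one_mul] at hmax habs
    have hval : x * u + g x = 1 := by
      rcases abs_eq (zero_le_one' ℝ) |>.1 habs with h | h
      · exact h
      · linarith [hmax 0 h0, hg0]
    exact ⟨u, fun y hy => by linarith [hmax y hy], by linarith⟩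

theorem eq_one_sub_mul_of_same_side {g : ℝ → ℝ} {a b x₀ : ℝ}
    (hsupp : ∀ x ∈ Ioo a b, ∃ k, IsSupportingSlope (Icc a b) g x k) (hg0 : g 0 = 1)
    (hlim : ∀ y ∈ Icc a b, ∀ t, Tendsto g (𝓝[Ioo a b] y) (𝓝 t) → t ≤ g y)
    (hx₀ : x₀ ∈ Ioo a b) (hx₀ne : x₀ ≠ 0) :
    ∃ k, ∀ y ∈ Icc a b, 0 ≤ y * x₀ → g y = 1 - k * y := by
  obtain ⟨k, hk⟩ := hsupp x₀ hx₀
  refine ⟨k, fun y hy hyx₀ => ?_⟩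
  rcases eq_or_ne y 0 with rfl | hy0
  · simpa using hg0
  have hside : ∀ᶠ z in 𝓝[Ioo a b] y, g z = 1 - k * z := by
    have hpos : ∀ᶠ z in 𝓝 y, 0 < z * x₀ :=
      (continuous_id.mul continuous_const).continuousAt.eventually
        (lt_mem_nhds (lt_of_le_of_ne hyx₀ (mul_ne_zero hy0 hx₀ne).symm))
    filter_upwards [nhdsWithin_le_nhds hpos, self_mem_nhdsWithin] with z hz hzI
    obtain ⟨k', hk'⟩ := hsupp z hzI
    rw [hk'.2, hk'.slope_eq hk (Ioo_subset_Icc_self hzI) (Ioo_subset_Icc_self hx₀) hz]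
  have hline : Tendsto (fun z => 1 - k * z) (𝓝[Ioo a b] y) (𝓝 (1 - k * y)) :=
    ((continuous_const.sub (continuous_const.mul continuous_id)).tendsto y).mono_left
      nhdsWithin_le_nhds
  exact le_antisymm (hk.1 y hy) (hlim y hy _ (hline.congr' (hside.mono fun z hz => hz.symm)))

section Interval

variable {a b : ℤ} {f : (Fin 1 → ℝ) → ℝ}

theorem IsICPA.concaveOn_comp_const (hf : IsICPA 1 (intervalBox a b) f) :
    ConcaveOn ℝ (Icc (a : ℝ) b) (f ∘ Function.const (Fin 1)) :=
  hf.concaveOn.comp_linearMap (LinearMap.pi fun _ => LinearMap.id)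

theorem IsICPA.le_of_tendsto_comp_const (hf : IsICPA 1 (intervalBox a b) f) (hab : a < b)
    {y t : ℝ} (hy : y ∈ Icc (a : ℝ) b)
    (ht : Tendsto (f ∘ Function.const (Fin 1)) (𝓝[Ioo (a : ℝ) b] y) (𝓝 t)) :
    t ≤ (f ∘ Function.const (Fin 1)) y := by
  have : (𝓝[Ioo (a : ℝ) b] y).NeBot := mem_closure_iff_nhdsWithin_neBot.1 <| by
    rwa [closure_Ioo (by exact_mod_cast hab.ne)]
  exact hf.le_of_tendsto (l := 𝓝[Ioo (a : ℝ) b] y) hy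
    (eventually_nhdsWithin_of_forall fun z hz => Ioo_subset_Icc_self hz)
    ((continuous_pi fun _ => continuous_id).continuousWithinAt (s := Ioo (a : ℝ) b)).tendsto ht

theorem AtHeightOne.exists_isSupportingSlope (hht : AtHeightOne 1 (intervalBox a b) f)
    (hf : IsICPA 1 (intervalBox a b) f) (ha : a ≤ 0) (hb : 0 ≤ b) (hf0 : f 0 = 1) {x : ℝ}
    (hx : x ∈ Ioo (a : ℝ) b) :
    ∃ k, IsSupportingSlope (Icc (a : ℝ) b) (f ∘ Function.const (Fin 1)) x k := by
  obtain ⟨u, m, habs, hmax⟩ := hht (Function.const (Fin 1) x) (Ioo_subset_Icc_self hx)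
  simp only [dotZ, Fin.sum_univ_one] at habs hmax
  exact hf.concaveOn_comp_const.exists_isSupportingSlope
    ⟨by exact_mod_cast ha, by exact_mod_cast hb⟩ hf0 hx (u 0) m habs
    fun y hy => hmax (Function.const (Fin 1) y) hy

end Interval

theorem integral_function_at_most_one_interior_vertex_general
    (a b : ℤ) (ha : a < 0) (hb : 0 < b)
    (f : (Fin 1 → ℝ) → ℝ)
    (hicpa : IsICPA 1 (intervalBox a b) f)
    (hht : AtHeightOne 1 (intervalBox a b) f)
    (hf0 : f 0 = 1) :
    (∃ s c : ℝ, ∀ p ∈ intervalBox a b, p 0 ≤ 0 → f p = s * p 0 + c) ∧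
    (∃ s c : ℝ, ∀ p ∈ intervalBox a b, 0 ≤ p 0 → f p = s * p 0 + c) := by
  have ha' : (a : ℝ) < 0 := by exact_mod_cast ha
  have hb' : (0 : ℝ) < b := by exact_mod_cast hb
  have hside := fun x₀ => eq_one_sub_mul_of_same_side (x₀ := x₀)
    (fun x hx => hht.exists_isSupportingSlope hicpa ha.le hb.le hf0 hx) hf0
    (fun y hy t => hicpa.le_of_tendsto_comp_const (ha.trans hb) hy)
  obtain ⟨kl, hl⟩ := hside (a / 2) ⟨by linarith, by linarith⟩ (by linarith)
  obtain ⟨kr, hr⟩ := hside (b / 2) ⟨by linarith, by linarith⟩ (by linarith)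
  have hf_eq : ∀ p : Fin 1 → ℝ, f p = (f ∘ Function.const (Fin 1)) (p 0) := fun p =>
    congrArg f (funext fun i => congrArg p (Subsingleton.elim i 0))
  refine ⟨⟨-kl, 1, fun p hp hp0 => ?_⟩, ⟨-kr, 1, fun p hp hp0 => ?_⟩⟩
  · rw [hf_eq, hl (p 0) hp (by nlinarith)]; ring
  · rw [hf_eq, hr (p 0) hp (by nlinarith)]; ring

/-- An integral (`f 0 = 1`) concave piecewise-affine function at height one on an interval
`[a,b]` of length greater than two, with `a < 0 < b`, is affine on `[a,0]` and on `[0,b]`. -/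
theorem integral_function_at_most_one_interior_vertex
    (a b : ℤ) (ha : a < 0) (hb : 0 < b) (hab : 2 < b - a)
    (f : (Fin 1 → ℝ) → ℝ)
    (hicpa : IsICPA 1 (intervalBox a b) f)
    (hht : AtHeightOne 1 (intervalBox a b) f)
    (hf0 : f 0 = 1) :
    (∃ s c : ℝ, ∀ p ∈ intervalBox a b, p 0 ≤ 0 → f p = s * p 0 + c) ∧
    (∃ s c : ℝ, ∀ p ∈ intervalBox a b, 0 ≤ p 0 → f p = s * p 0 + c) :=
  integral_function_at_most_one_interior_vertex_general a b ha hb f hicpa hht hf0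

end
end

section
/- Let m > 2 be an integer, let Box = [−1, m−1] ⊆ ℝ, and suppose f₁, f₂, f₃ is normalized Fano data on Box consisting of exactly three functions (with d = 1). Then m ∈ {3, 4, 6}. -/
open scoped BigOperators

noncomputable section

/-!
Restricted to the base, each `fᵢ` becomes a concave function `φ` on `[-1, m-1]` whose graph has
its vertices in `ℤ²`, hence breaks only at integers, and whose facets lie on lines
`K t = P y + 1` with `K ≥ 1` (height one, oriented by `φ 0 > 0`). For the facet over `[m-2, m-1]`
either `φ` is affine, and then its integral end values give `K ∣ m`, or the facet starts at an
integer `c ≥ 0`; comparing the two facets at the vertex `(c, φ c)` shows that the preceding facet,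
on which lattice points are `L ≥ c + K` apart, cannot fit into `[-1, c]` unless `K = 1`.
Adding the three facet equations at `m - 1` (where `∑ φᵢ = 1`) and at `m - 2` (where `∑ φᵢ > 1`)
gives `(m - 1) ∣ K₁K₂ + K₁K₃ + K₂K₃ - K₁K₂K₃ > 0`, which together with `Kᵢ ∣ m` leaves
`m ∈ {3, 4, 6}`.
-/

open Set

def halfPlane (α β γ : ℝ) : Set (ℝ × ℝ) := {q | α * q.1 + β * q.2 ≤ γ}

theorem convex_halfPlane (α β γ : ℝ) : Convex ℝ (halfPlane α β γ) :=
  convex_halfSpace_le ⟨fun p q => by simp only [Prod.fst_add, Prod.snd_add]; ring,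
    fun c p => by simp only [Prod.smul_fst, Prod.smul_snd, smul_eq_mul]; ring⟩ γ

theorem mem_extremePoints_halfPlane_inter {α₁ β₁ γ₁ α₂ β₂ γ₂ : ℝ} {p : ℝ × ℝ}
    (hdet : α₁ * β₂ ≠ α₂ * β₁) (h₁ : α₁ * p.1 + β₁ * p.2 = γ₁) (h₂ : α₂ * p.1 + β₂ * p.2 = γ₂) :
    p ∈ (halfPlane α₁ β₁ γ₁ ∩ halfPlane α₂ β₂ γ₂).extremePoints ℝ := by
  refine ⟨⟨h₁.le, h₂.le⟩, fun q ⟨hq₁, hq₂⟩ r ⟨hr₁, hr₂⟩ ⟨s, t, hs, ht, hst, hp⟩ => ?_⟩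
  simp only [halfPlane, mem_ofPred_eq] at hq₁ hq₂ hr₁ hr₂
  have hp₁ : p.1 = s * q.1 + t * r.1 := by rw [← hp]; simp
  have hp₂ : p.2 = s * q.2 + t * r.2 := by rw [← hp]; simp
  have on_line {α β γ : ℝ} (hq : α * q.1 + β * q.2 ≤ γ) (hr : α * r.1 + β * r.2 ≤ γ)
      (h : α * p.1 + β * p.2 = γ) : α * q.1 + β * q.2 = γ := by
    refine hq.antisymm (not_lt.1 fun hlt => ?_)
    rw [hp₁, hp₂] at h
    nlinarith [mul_lt_mul_of_pos_left hlt hs, mul_le_mul_of_nonneg_left hr ht.le,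
      congrArg (· * γ) hst]
  have e₁ := on_line hq₁ hr₁ h₁
  have e₂ := on_line hq₂ hr₂ h₂
  have hne : α₁ * β₂ - α₂ * β₁ ≠ 0 := sub_ne_zero.2 hdet
  refine Prod.ext (mul_left_cancel₀ hne ?_) (mul_left_cancel₀ hne ?_)
  · linear_combination β₂ * e₁ - β₁ * e₂ - β₂ * h₁ + β₁ * h₂
  · linear_combination α₁ * e₂ - α₂ * e₁ - α₁ * h₂ + α₂ * h₁

theorem ConcaveOn.mul_le_secant_of_notMem_Ioo {s : Set ℝ} {φ : ℝ → ℝ} (hφ : ConcaveOn ℝ s φ)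
    {p q y : ℝ}
    (hp : p ∈ s) (hq : q ∈ s) (hy : y ∈ s) (hpq : p < q) (hyI : y ∉ Ioo p q) :
    (q - p) * φ y ≤ (q - y) * φ p + (y - p) * φ q := by
  rcases lt_trichotomy y p with hyp | rfl | hpy
  · have h := hφ.neg.secant_mono_aux1 hy hq hyp hpq
    simp only [Pi.neg_apply] at h
    linarith
  · linarith
  rcases (not_lt.1 fun h => hyI ⟨hpy, h⟩).eq_or_lt with rfl | hqy
  · linarith
  · have h := hφ.neg.secant_mono_aux1 hp hy hpq hqy
    simp only [Pi.neg_apply] at h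
    linarith

section LatticeConcave

variable {a b : ℤ} {φ : ℝ → ℝ}

def latticeHypograph (a b : ℤ) (φ : ℝ → ℝ) : Set (ℝ × ℝ) :=
  {q | ∃ ξ τ : ℤ, (ξ : ℝ) ∈ Icc (a : ℝ) b ∧ (τ : ℝ) ≤ φ ξ ∧ q = ((ξ : ℝ), (τ : ℝ))}

-- The one-dimensional form of `IsICPA`: `φ` is the upper boundary of the convex hull of the
-- lattice points below its graph.
structure IsLatticeConcave (a b : ℤ) (φ : ℝ → ℝ) : Prop where
  concaveOn : ConcaveOn ℝ (Icc (a : ℝ) b) φ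
  mem_convexHull : ∀ x ∈ Icc (a : ℝ) b, (x, φ x) ∈ convexHull ℝ (latticeHypograph a b φ)

theorem latticeHypograph_subset_halfPlane_left (a b : ℤ) (φ : ℝ → ℝ) :
    latticeHypograph a b φ ⊆ halfPlane (-1) 0 (-a) := by
  rintro _ ⟨ξ, τ, hξ, -, rfl⟩
  simp only [halfPlane, mem_ofPred_eq]
  linarith [hξ.1]

theorem latticeHypograph_subset_halfPlane_right (a b : ℤ) (φ : ℝ → ℝ) :
    latticeHypograph a b φ ⊆ halfPlane 1 0 b := by
  rintro _ ⟨ξ, τ, hξ, -, rfl⟩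
  simp only [halfPlane, mem_ofPred_eq]
  linarith [hξ.2]

namespace IsLatticeConcave

variable (hφ : IsLatticeConcave a b φ)
include hφ

theorem le_of_forall_int_le {r c : ℝ} (h : ∀ ξ : ℤ, (ξ : ℝ) ∈ Icc (a : ℝ) b → φ ξ ≤ r * ξ + c)
    {x : ℝ} (hx : x ∈ Icc (a : ℝ) b) : φ x ≤ r * x + c := by
  have hsub : latticeHypograph a b φ ⊆ halfPlane (-r) 1 c := by
    rintro _ ⟨ξ, τ, hξ, hτ, rfl⟩
    simp only [halfPlane, mem_ofPred_eq]
    linarith [h ξ hξ]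
  have := convexHull_min hsub (convex_halfPlane _ _ _) (hφ.mem_convexHull x hx)
  simp only [halfPlane, mem_ofPred_eq] at this
  linarith

theorem le_unitSecant {j : ℤ} (hj : a ≤ j) (hj' : j + 1 ≤ b) {y : ℝ} (hy : y ∈ Icc (a : ℝ) b) :
    φ y ≤ (j + 1 - y) * φ j + (y - j) * φ (j + 1) := by
  have hjR : (a : ℝ) ≤ j := by exact_mod_cast hj
  have hjR' : (j : ℝ) + 1 ≤ b := by exact_mod_cast hj'
  have hmem : ∀ y, (j : ℝ) ≤ y → y ≤ j + 1 → y ∈ Icc (a : ℝ) b :=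
    fun y h h' => ⟨hjR.trans h, h'.trans hjR'⟩
  have hint (ξ : ℤ) (hξ : (ξ : ℝ) ∈ Icc (a : ℝ) b) :
      φ ξ ≤ (φ (j + 1) - φ j) * ξ + ((j + 1) * φ j - j * φ (j + 1)) := by
    have hξj : (ξ : ℝ) ∉ Ioo (j : ℝ) (j + 1) := fun ⟨h, h'⟩ => by
      have : j < ξ := by exact_mod_cast h
      have : ξ < j + 1 := by exact_mod_cast h'
      omega
    have := hφ.concaveOn.mul_le_secant_of_notMem_Ioo (hmem _ le_rfl (by linarith))
      (hmem _ (by linarith) le_rfl) hξ (by linarith) hξj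
    linarith
  linarith [hφ.le_of_forall_int_le hint hy]

theorem eq_unitSecant {j : ℤ} (hj : a ≤ j) (hj' : j + 1 ≤ b) {y : ℝ}
    (hy : y ∈ Icc (j : ℝ) (j + 1)) :
    φ y = (j + 1 - y) * φ j + (y - j) * φ (j + 1) := by
  have hjR : (a : ℝ) ≤ j := by exact_mod_cast hj
  have hjR' : (j : ℝ) + 1 ≤ b := by exact_mod_cast hj'
  refine (hφ.le_unitSecant hj hj' ⟨hjR.trans hy.1, hy.2.trans hjR'⟩).antisymm ?_
  have := hφ.concaveOn.2 (show (j : ℝ) ∈ Icc (a : ℝ) b from ⟨hjR, by linarith⟩)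
    (show (j : ℝ) + 1 ∈ Icc (a : ℝ) b from ⟨by linarith, hjR'⟩)
    (show 0 ≤ (j : ℝ) + 1 - y by linarith [hy.2]) (show 0 ≤ y - j by linarith [hy.1]) (by ring)
  simp only [smul_eq_mul] at this
  convert this using 2
  ring

theorem exists_int_eq_of_mem_extremePoints {C : Set (ℝ × ℝ)} (hC : Convex ℝ C)
    (hsub : latticeHypograph a b φ ⊆ C) {x : ℝ} (hx : x ∈ Icc (a : ℝ) b)
    (hext : (x, φ x) ∈ C.extremePoints ℝ) : ∃ n : ℤ, φ x = n := by
  have := inter_extremePoints_subset_extremePoints_of_subset (convexHull_min hsub hC)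
    ⟨hφ.mem_convexHull x hx, hext⟩
  obtain ⟨_, τ, -, -, hτ⟩ : (x, φ x) ∈ latticeHypograph a b φ :=
    extremePoints_convexHull_subset this
  exact ⟨τ, congrArg Prod.snd hτ⟩

theorem exists_int_eq_of_corner {α₁ β₁ γ₁ α₂ β₂ γ₂ : ℝ} (hdet : α₁ * β₂ ≠ α₂ * β₁)
    (hsub₁ : latticeHypograph a b φ ⊆ halfPlane α₁ β₁ γ₁)
    (hsub₂ : latticeHypograph a b φ ⊆ halfPlane α₂ β₂ γ₂) {x : ℝ} (hx : x ∈ Icc (a : ℝ) b)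
    (h₁ : α₁ * x + β₁ * φ x = γ₁) (h₂ : α₂ * x + β₂ * φ x = γ₂) : ∃ n : ℤ, φ x = n :=
  hφ.exists_int_eq_of_mem_extremePoints ((convex_halfPlane _ _ _).inter (convex_halfPlane _ _ _))
    (subset_inter hsub₁ hsub₂) hx (mem_extremePoints_halfPlane_inter hdet h₁ h₂)

end IsLatticeConcave

def HasHeightOneFacets (a b : ℤ) (φ : ℝ → ℝ) : Prop :=
  ∀ x ∈ Icc (a : ℝ) b, ∃ u μ : ℤ,
    |x * u + μ * φ x| = 1 ∧ ∀ y ∈ Icc (a : ℝ) b, y * u + μ * φ y ≤ x * u + μ * φ x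

def IsHeightOneMajorant (a b : ℤ) (φ : ℝ → ℝ) (K P : ℤ) : Prop :=
  0 < K ∧ ∀ y ∈ Icc (a : ℝ) b, K * φ y ≤ P * y + 1

theorem IsHeightOneMajorant.latticeHypograph_subset {a b K P : ℤ} {φ : ℝ → ℝ}
    (h : IsHeightOneMajorant a b φ K P) : latticeHypograph a b φ ⊆ halfPlane (-P) K 1 := by
  rintro _ ⟨ξ, τ, hξ, hτ, rfl⟩
  simp only [halfPlane, mem_ofPred_eq]
  have hK : (0 : ℝ) < K := by exact_mod_cast h.1
  nlinarith [h.2 ξ hξ]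

namespace IsLatticeConcave

variable (hφ : IsLatticeConcave a b φ) (hh : HasHeightOneFacets a b φ)
  (ha : a ≤ 0) (hb : 0 ≤ b) (hφ0 : 0 < φ 0)
include hφ hh ha hb hφ0

theorem exists_majorant_touching_unit {j : ℤ} (hj : a ≤ j) (hj' : j + 1 ≤ b) :
    ∃ K P : ℤ, IsHeightOneMajorant a b φ K P ∧ K * φ j = P * j + 1 ∧
      K * φ (j + 1) = P * (j + 1) + 1 := by
  have hjR : (a : ℝ) ≤ j := by exact_mod_cast hj
  have hjR' : (j : ℝ) + 1 ≤ b := by exact_mod_cast hj'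
  have hmem : ∀ y, (j : ℝ) ≤ y → y ≤ j + 1 → y ∈ Icc (a : ℝ) b :=
    fun y h h' => ⟨hjR.trans h, h'.trans hjR'⟩
  have h0 : (0 : ℝ) ∈ Icc (a : ℝ) b := ⟨by exact_mod_cast ha, by exact_mod_cast hb⟩
  obtain ⟨u, μ, hε, hmax⟩ := hh (j + 1 / 2) (hmem _ (by linarith) (by linarith))
  have hmid := hφ.eq_unitSecant hj hj' (y := j + 1 / 2) ⟨by linarith, by linarith⟩
  generalize hεdef : (j + 1 / 2 : ℝ) * u + μ * φ (j + 1 / 2) = ε at hε hmax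
  have hleft := hmax j (hmem _ le_rfl (by linarith))
  have hright := hmax (j + 1) (hmem _ (by linarith) le_rfl)
  have hmean : 2 * ε = (j * u + μ * φ j) + ((j + 1) * u + μ * φ (j + 1)) := by
    rw [← hεdef, hmid]; ring
  have hgj : j * u + μ * φ j = ε := by linarith
  have hgj' : (j + 1) * u + μ * φ (j + 1) = ε := by linarith
  have hε' : ε = 1 ∨ ε = -1 := (abs_eq zero_le_one).1 hε
  rcases lt_trichotomy μ 0 with hμ | rfl | hμ
  -- for `μ < 0` the height-one line is the unit secant, which majorizes `φ`
  · have hμR : (μ : ℝ) < 0 := by exact_mod_cast hμ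
    have hline : ∀ y ∈ Icc (a : ℝ) b, (-μ : ℝ) * φ y ≤ u * y - ε := fun y hy => by
      have := mul_le_mul_of_nonneg_left (hφ.le_unitSecant hj hj' hy) (neg_nonneg.2 hμR.le)
      linear_combination this - (j + 1 - y) * hgj - (y - j) * hgj'
    have hε1 : ε = -1 := hε'.resolve_left fun h1 => by
      nlinarith [hline 0 h0, mul_pos (neg_pos.2 hμR) hφ0]
    refine ⟨-μ, u, ⟨by omega, fun y hy => ?_⟩, ?_, ?_⟩
    · push_cast; linarith [hline y hy]
    · push_cast; linarith
    · push_cast; linarith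
  · have hu : (u : ℝ) = 0 := by push_cast at hgj hgj'; linarith
    rw [← hgj, hu] at hε
    norm_num at hε
  · have hμR : (0 : ℝ) < μ := by exact_mod_cast hμ
    have hε1 : ε = 1 := hε'.resolve_right fun h1 => by
      nlinarith [hmax 0 h0, mul_pos hμR hφ0]
    refine ⟨μ, -u, ⟨hμ, fun y hy => ?_⟩, ?_, ?_⟩
    · push_cast; linarith [hmax y hy]
    · push_cast; linarith
    · push_cast; linarith

theorem exists_leftmost_touch {K P : ℤ} (hKP : IsHeightOneMajorant a b φ K P) {e : ℤ}
    (he : a ≤ e) (he' : e ≤ b) (hKe : K * φ e = P * e + 1) :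
    ∃ c : ℤ, a ≤ c ∧ c ≤ e ∧ K * φ c = P * c + 1 ∧ (∃ v : ℤ, φ c = v) ∧
      (a < c → ∃ L Q : ℤ, IsHeightOneMajorant a b φ L Q ∧ L * φ (c - 1) = Q * (c - 1) + 1 ∧
        L * φ c = Q * c + 1 ∧ L * P < K * Q) := by
  obtain ⟨c, ⟨hac, hKc⟩, hmin⟩ := Int.exists_least_of_bdd
    (P := fun z : ℤ => a ≤ z ∧ K * φ z = P * z + 1) ⟨a, fun z hz => hz.1⟩ ⟨e, he, hKe⟩
  have hce : c ≤ e := hmin e ⟨he, hKe⟩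
  have hcR : (c : ℝ) ∈ Icc (a : ℝ) b := ⟨by exact_mod_cast hac, by exact_mod_cast hce.trans he'⟩
  have hK : (0 : ℝ) < K := by exact_mod_cast hKP.1
  rcases hac.eq_or_lt with rfl | hlt
  · refine ⟨a, le_rfl, hce, hKc, hφ.exists_int_eq_of_corner (by simpa using hK.ne')
      (latticeHypograph_subset_halfPlane_left _ _ _) hKP.latticeHypograph_subset hcR (by ring)
      (by linarith), fun h => absurd h (lt_irrefl _)⟩
  obtain ⟨L, Q, hLQ, hL₁, hL₂⟩ :=
    hφ.exists_majorant_touching_unit hh ha hb hφ0 (j := c - 1) (by omega) (by omega)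
  push_cast at hL₁ hL₂
  rw [sub_add_cancel] at hL₂
  have hL : (0 : ℝ) < L := by exact_mod_cast hLQ.1
  have hc₁ : (c : ℝ) - 1 ∈ Icc (a : ℝ) b := by
    have : ((c - 1 : ℤ) : ℝ) ∈ Icc (a : ℝ) b :=
      ⟨by exact_mod_cast (by omega : a ≤ c - 1), by exact_mod_cast (by omega : c - 1 ≤ b)⟩
    simpa using this
  -- by minimality of `c` the facet over `[c - 1, c]` is not on the line of `(K, P)`
  have hstrict : K * φ (c - 1) < P * (c - 1) + 1 := (hKP.2 _ hc₁).lt_of_ne fun h => by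
    have := hmin (c - 1) ⟨by omega, by push_cast; exact h⟩
    omega
  have hslopeR : (L : ℝ) * P < K * Q := by
    linarith [mul_lt_mul_of_pos_left hstrict hL, congrArg ((K : ℝ) * ·) hL₁,
      congrArg ((K : ℝ) * ·) hL₂, congrArg ((L : ℝ) * ·) hKc]
  refine ⟨c, hac, hce, hKc, hφ.exists_int_eq_of_corner (fun h => by linarith)
    hKP.latticeHypograph_subset hLQ.latticeHypograph_subset hcR (by linarith) (by linarith),
    fun _ => ⟨L, Q, hLQ, hL₁, hL₂, by exact_mod_cast hslopeR⟩⟩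

end IsLatticeConcave

end LatticeConcave

-- `(c, v)` is a lattice vertex on the facets `K t = P y + 1` (right) and `L t = Q y + 1` (left),
-- `(c', w)` a lattice point on the left facet; lattice points on that facet are `L` apart.
theorem eq_one_of_kink {K L P Q c c' v w : ℤ} (hK : 0 < K) (hc : 0 ≤ c)
    (hc' : -1 ≤ c') (hc'c : c' < c) (hKv : K * v = P * c + 1) (hLv : L * v = Q * c + 1)
    (hLw : L * w = Q * c' + 1) (hslope : L * P < K * Q) : K = 1 := by
  rcases hc.eq_or_lt with rfl | hc
  · exact Int.eq_one_of_mul_eq_one_right hK.le (by simpa using hKv)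
  have hD : c * (K * Q - L * P) = L - K := by linear_combination L * hKv - K * hLv
  have hLK : c ≤ L - K := by nlinarith
  have hcop : IsCoprime L Q := ⟨v, -c, by linear_combination hLv⟩
  have hdvd : L ∣ c - c' := hcop.dvd_of_dvd_mul_left ⟨v - w, by linear_combination hLw - hLv⟩
  have := Int.le_of_dvd (by omega) hdvd
  omega

theorem IsLatticeConcave.exists_majorant_touching_last_unit_dvd {b : ℤ} {φ : ℝ → ℝ}
    (hφ : IsLatticeConcave (-1) b φ) (hh : HasHeightOneFacets (-1) b φ) (hb : 0 ≤ b)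
    (hφ0 : 0 < φ 0) :
    ∃ K P : ℤ, IsHeightOneMajorant (-1) b φ K P ∧ K * φ (b - 1) = P * (b - 1) + 1 ∧
      K * φ b = P * b + 1 ∧ K ∣ b + 1 := by
  have ha : (-1 : ℤ) ≤ 0 := by norm_num
  obtain ⟨K, P, hKP, h₁, h₂⟩ :=
    hφ.exists_majorant_touching_unit hh ha hb hφ0 (j := b - 1) (by omega) (by omega)
  push_cast at h₁ h₂
  rw [sub_add_cancel] at h₂
  refine ⟨K, P, hKP, h₁, h₂, ?_⟩
  have hK : (0 : ℝ) < K := by exact_mod_cast hKP.1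
  have hbR : (b : ℝ) ∈ Icc ((-1 : ℤ) : ℝ) b :=
    ⟨by exact_mod_cast (by omega : (-1 : ℤ) ≤ b), le_rfl⟩
  obtain ⟨A, hA⟩ := hφ.exists_int_eq_of_corner (by simpa using hK.ne')
    (latticeHypograph_subset_halfPlane_right _ _ _) hKP.latticeHypograph_subset hbR (by ring)
    (by linarith)
  have hKA : K * A = P * b + 1 := by rw [hA] at h₂; exact_mod_cast h₂
  obtain ⟨c, hc₁, hcb, hKc, ⟨v, hv⟩, hkink⟩ :=
    hφ.exists_leftmost_touch hh ha hb hφ0 hKP (by omega) le_rfl h₂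
  have hKv : K * v = P * c + 1 := by rw [hv] at hKc; exact_mod_cast hKc
  rcases hc₁.eq_or_lt with rfl | hc
  · have hcop : IsCoprime K P := ⟨v, 1, by linear_combination hKv⟩
    exact hcop.dvd_of_dvd_mul_left ⟨A - v, by linear_combination hKv - hKA⟩
  obtain ⟨L, Q, hLQ, hL₁, hL₂, hslope⟩ := hkink hc
  obtain ⟨c', hc'₁, hc'c, hLc', ⟨w, hw⟩, -⟩ :=
    hφ.exists_leftmost_touch hh ha hb hφ0 hLQ (e := c - 1) (by omega) (by omega)
      (by push_cast; exact hL₁)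
  have hLv : L * v = Q * c + 1 := by rw [hv] at hL₂; exact_mod_cast hL₂
  have hLw : L * w = Q * c' + 1 := by rw [hw] at hLc'; exact_mod_cast hLc'
  rw [eq_one_of_kink hKP.1 (by omega) hc'₁ (by omega) hKv hLv hLw hslope]
  exact one_dvd _

theorem intervalBox_eq_preimage (a b : ℤ) :
    intervalBox a b = Homeomorph.funUnique (Fin 1) ℝ ⁻¹' Icc (a : ℝ) b :=
  rfl

theorem const_mem_interior_intervalBox {a b : ℤ} {t : ℝ} :
    Function.const (Fin 1) t ∈ interior (intervalBox a b) ↔ t ∈ Ioo (a : ℝ) b := by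
  rw [intervalBox_eq_preimage, ← Homeomorph.preimage_interior, interior_Icc]
  rfl

theorem const_mem_frontier_intervalBox {a b : ℤ} (hab : a ≤ b) {t : ℝ} :
    Function.const (Fin 1) t ∈ frontier (intervalBox a b) ↔ t = a ∨ t = b := by
  rw [intervalBox_eq_preimage, ← Homeomorph.preimage_frontier,
    frontier_Icc (by exact_mod_cast hab)]
  rfl

theorem latticeEmbed_one (s : (Fin 1 → ℤ) × ℤ) :
    latticeEmbed 1 s = (Function.const (Fin 1) (s.1 0 : ℝ), (s.2 : ℝ)) := by
  ext i
  · simp [latticeEmbed, Fin.fin_one_eq_zero i]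
  · rfl

theorem IsICPA.isLatticeConcave {a b : ℤ} {f : (Fin 1 → ℝ) → ℝ}
    (hf : IsICPA 1 (intervalBox a b) f) :
    IsLatticeConcave a b (fun t => f (Function.const (Fin 1) t)) := by
  obtain ⟨S, hproj, hmax⟩ := hf
  set C := convexHull ℝ (latticeEmbed 1 '' (S : Set ((Fin 1 → ℤ) × ℤ)))
  have hbox {p : (Fin 1 → ℝ) × ℝ} (hp : p ∈ C) : p.1 ∈ intervalBox a b := hproj ▸ ⟨p, hp, rfl⟩
  have hgraph {x : ℝ} (hx : x ∈ Icc (a : ℝ) b) :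
      (Function.const (Fin 1) x, f (Function.const _ x)) ∈ C :=
    (hmax _ hx).1
  have hle {x t : ℝ} (h : (Function.const (Fin 1) x, t) ∈ C) : t ≤ f (Function.const _ x) :=
    (hmax _ (hbox h)).2 h
  refine ⟨⟨convex_Icc _ _, fun x hx y hy s t hs ht hst => hle ?_⟩, fun x hx => ?_⟩
  · convert (convex_convexHull ℝ _) (hgraph hx) (hgraph hy) hs ht hst using 1
    ext <;> simp
  · let π : ((Fin 1 → ℝ) × ℝ) →ₗ[ℝ] ℝ × ℝ := (LinearMap.proj 0).prodMap LinearMap.id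
    have hπ : π '' C ⊆ convexHull ℝ (latticeHypograph a b fun t => f (Function.const _ t)) := by
      rw [LinearMap.image_convexHull]
      refine convexHull_mono ?_
      rintro _ ⟨_, ⟨s, hs, rfl⟩, rfl⟩
      have hsC : latticeEmbed 1 s ∈ C := subset_convexHull ℝ _ ⟨s, hs, rfl⟩
      rw [latticeEmbed_one] at hsC
      exact ⟨s.1 0, s.2, hbox hsC, hle hsC, by simp [π, latticeEmbed]⟩
    exact hπ ⟨_, hgraph hx, rfl⟩

theorem AtHeightOne.hasHeightOneFacets {a b : ℤ} {f : (Fin 1 → ℝ) → ℝ}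
    (hf : AtHeightOne 1 (intervalBox a b) f) :
    HasHeightOneFacets a b (fun t => f (Function.const (Fin 1) t)) := by
  intro x hx
  obtain ⟨u, μ, h₁, h₂⟩ := hf (Function.const (Fin 1) x) hx
  exact ⟨u 0, μ, by simpa [dotZ] using h₁,
    fun y hy => by simpa [dotZ] using h₂ (Function.const (Fin 1) y) hy⟩

theorem eq_or_eq_two_mul_or_three_mul_le_of_dvd {d n : ℤ} (hd : 0 < d) (hn : 0 < n)
    (h : d ∣ n) : n = d ∨ n = 2 * d ∨ 3 * d ≤ n := by
  obtain ⟨k, rfl⟩ := h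
  have hk : 0 < k := pos_of_mul_pos_right hn hd.le
  rcases (by omega : k = 1 ∨ k = 2 ∨ 3 ≤ k) with rfl | rfl | hk
  · exact Or.inl (mul_one d)
  · exact Or.inr (Or.inl (mul_comm d 2))
  · exact Or.inr (Or.inr (by nlinarith))

theorem eq_three_or_four_or_six_of_dvd_add {m d e : ℤ} (hm : 2 < m) (hd : 0 < d) (he : 0 < e)
    (hdm : d ∣ m) (hem : e ∣ m) (h : m - 1 ∣ d + e) : m = 3 ∨ m = 4 ∨ m = 6 := by
  have := eq_or_eq_two_mul_or_three_mul_le_of_dvd hd (by omega) hdm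
  have := eq_or_eq_two_mul_or_three_mul_le_of_dvd he (by omega) hem
  have := eq_or_eq_two_mul_or_three_mul_le_of_dvd (by omega : 0 < m - 1) (by omega) h
  omega

theorem eq_three_or_four_or_six_of_dvd_sub {m K₁ K₂ K₃ : ℤ} (hm : 2 < m)
    (h₁ : 0 < K₁) (h₂ : 0 < K₂) (h₃ : 0 < K₃) (hd₁ : K₁ ∣ m) (hd₂ : K₂ ∣ m) (hd₃ : K₃ ∣ m)
    (hpos : 0 < K₁ * K₂ + K₁ * K₃ + K₂ * K₃ - K₁ * K₂ * K₃)
    (hdvd : m - 1 ∣ K₁ * K₂ + K₁ * K₃ + K₂ * K₃ - K₁ * K₂ * K₃) : m = 3 ∨ m = 4 ∨ m = 6 := by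
  by_cases hone : K₁ = 1 ∨ K₂ = 1 ∨ K₃ = 1
  · rcases hone with rfl | rfl | rfl
    · exact eq_three_or_four_or_six_of_dvd_add hm h₂ h₃ hd₂ hd₃ (by convert hdvd using 1; ring)
    · exact eq_three_or_four_or_six_of_dvd_add hm h₁ h₃ hd₁ hd₃ (by convert hdvd using 1; ring)
    · exact eq_three_or_four_or_six_of_dvd_add hm h₁ h₂ hd₁ hd₂ (by convert hdvd using 1; ring)
  have h₁ : 2 ≤ K₁ := by omega
  have h₂ : 2 ≤ K₂ := by omega
  have h₃ : 2 ≤ K₃ := by omega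
  have hle := Int.le_of_dvd hpos hdvd
  have htwo : K₁ = 2 ∨ K₂ = 2 ∨ K₃ = 2 := by
    by_contra! h
    nlinarith [mul_nonneg (mul_nonneg (by omega : (0 : ℤ) ≤ K₁) (by omega : (0 : ℤ) ≤ K₂))
        (by omega : (0 : ℤ) ≤ K₃ - 3),
      mul_nonneg (mul_nonneg (by omega : (0 : ℤ) ≤ K₁) (by omega : (0 : ℤ) ≤ K₃))
        (by omega : (0 : ℤ) ≤ K₂ - 3),
      mul_nonneg (mul_nonneg (by omega : (0 : ℤ) ≤ K₂) (by omega : (0 : ℤ) ≤ K₃))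
        (by omega : (0 : ℤ) ≤ K₁ - 3)]
  -- if some `Kᵢ = 2`, the sum equals `4 - (Kⱼ - 2) (Kₖ - 2) ≤ 4`, while `2 ∣ m`
  have h4 : K₁ * K₂ + K₁ * K₃ + K₂ * K₃ - K₁ * K₂ * K₃ ≤ 4 := by
    rcases htwo with rfl | rfl | rfl
    · nlinarith [mul_nonneg (by omega : (0 : ℤ) ≤ K₂ - 2) (by omega : (0 : ℤ) ≤ K₃ - 2)]
    · nlinarith [mul_nonneg (by omega : (0 : ℤ) ≤ K₁ - 2) (by omega : (0 : ℤ) ≤ K₃ - 2)]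
    · nlinarith [mul_nonneg (by omega : (0 : ℤ) ≤ K₁ - 2) (by omega : (0 : ℤ) ≤ K₂ - 2)]
  have h2m : 2 ∣ m := by rcases htwo with rfl | rfl | rfl <;> assumption
  omega

theorem dvd_and_pos_of_sum_eq_one_of_one_lt_sum {b : ℤ} (hb : 0 < b) {K P : Fin 3 → ℤ}
    {x y : Fin 3 → ℝ} (hK : ∀ i, 0 < K i) (hx : ∀ i, K i * x i = P i * b + 1)
    (hy : ∀ i, K i * y i = P i * (b - 1) + 1) (hxs : ∑ i, x i = 1) (hys : 1 < ∑ i, y i) :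
    b ∣ K 0 * K 1 + K 0 * K 2 + K 1 * K 2 - K 0 * K 1 * K 2 ∧
      0 < K 0 * K 1 + K 0 * K 2 + K 1 * K 2 - K 0 * K 1 * K 2 := by
  rw [Fin.sum_univ_three] at hxs hys
  set W : ℤ := -(P 0 * K 1 * K 2 + P 1 * K 0 * K 2 + P 2 * K 0 * K 1) with hWdef
  have hW : (b : ℝ) * W = K 0 * K 1 + K 0 * K 2 + K 1 * K 2 - K 0 * K 1 * K 2 := by
    rw [hWdef]
    push_cast
    linear_combination
      K 1 * K 2 * hx 0 + K 0 * K 2 * hx 1 + K 0 * K 1 * hx 2 - K 0 * K 1 * K 2 * hxs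
  have hprod : (0 : ℝ) < K 0 * K 1 * K 2 := by
    have := hK 0; have := hK 1; have := hK 2
    positivity
  have hWpos : (0 : ℝ) < W := by
    have hyW : (K 0 * K 1 * K 2 : ℝ) * (y 0 + y 1 + y 2) = W + K 0 * K 1 * K 2 := by
      rw [hWdef]
      push_cast
      linear_combination K 1 * K 2 * hy 0 + K 0 * K 2 * hy 1 + K 0 * K 1 * hy 2
        - (K 1 * K 2 * hx 0 + K 0 * K 2 * hx 1 + K 0 * K 1 * hx 2) + K 0 * K 1 * K 2 * hxs
    nlinarith [mul_lt_mul_of_pos_left hys hprod]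
  have hWZ : b * W = K 0 * K 1 + K 0 * K 2 + K 1 * K 2 - K 0 * K 1 * K 2 := by exact_mod_cast hW
  exact ⟨⟨W, hWZ.symm⟩, hWZ ▸ mul_pos hb (by exact_mod_cast hWpos)⟩

/-- If `[-1, m-1]` with `m > 2` carries normalized Fano data with exactly three functions,
then `m ∈ {3, 4, 6}`. -/
theorem base_length_three_four_or_six
    (m : ℤ) (hm : 2 < m)
    (f : Fin 3 → (Fin 1 → ℝ) → ℝ)
    (hf : NormalizedFanoData 1 3 (intervalBox (-1) (m - 1)) f) :
    m = 3 ∨ m = 4 ∨ m = 6 := by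
  obtain ⟨hicpa, hone, hpos, -, -, hint, hfront⟩ := hf
  choose K P hKP hK₁ hK₂ hdvd using fun i =>
    (hicpa i).isLatticeConcave.exists_majorant_touching_last_unit_dvd (hone i).hasHeightOneFacets
      (by omega) (hpos i)
  have hright : ∑ i, f i (Function.const (Fin 1) ((m - 1 : ℤ) : ℝ)) = 1 := by
    rcases hfront _ ((const_mem_frontier_intervalBox (by omega)).2 (Or.inr rfl))
      with h | ⟨u, hu, -⟩
    · rw [h]; norm_num
    · have : (m - 1) * u 0 = 1 := by simp [dotZ] at hu; exact_mod_cast hu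
      have := Int.eq_one_of_mul_eq_one_right (by omega) this
      omega
  have hinner : 1 < ∑ i, f i (Function.const (Fin 1) (((m - 1 : ℤ) : ℝ) - 1)) := by
    have hmR : (2 : ℝ) < m := by exact_mod_cast hm
    have := hint (Function.const (Fin 1) (((m - 1 : ℤ) : ℝ) - 1))
      (const_mem_interior_intervalBox.2 ⟨by push_cast; linarith, by linarith⟩)
    norm_num at this ⊢
    exact this
  obtain ⟨hD, hDpos⟩ := dvd_and_pos_of_sum_eq_one_of_one_lt_sum (by omega) (fun i => (hKP i).1)
    hK₂ hK₁ hright hinner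
  exact eq_three_or_four_or_six_of_dvd_sub hm (hKP 0).1 (hKP 1).1 (hKP 2).1
    (by simpa using hdvd 0) (by simpa using hdvd 1) (by simpa using hdvd 2) hDpos hD

end
end
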